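/- Fix k ≥ 1, points x_{k−1}, v_{k−1}, z_k ∈ X, and set γ_k = 3/(k+2) and α_k = 6κL/(k+1). Define ψ_k : X → ℝ^n by ψ_k(x) = (1−γ_k)x_{k−1} + γ_k · argmin_{v∈X} { ⟨∇_x f(z_k, y*(x)), v⟩ + (α_k/2)‖v − v_{k−1}‖² } (the minimizer is unique by strong convexity of the subproblem). Then ψ_k is a (1/2)-contraction: ‖ψ_k(x_1) − ψ_k(x_2)‖ ≤ (1/2)‖x_1 − x_2‖ for all x_1, x_2 ∈ X. -/

import Mathlib

/-!
Since `ψ x₁ - ψ x₂ = γ • (v x₁ - v x₂)` with `v` the argmin map, it suffices to chain three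
Lipschitz estimates. Adding the variational inequalities of the two proximal subproblems shows
that the proximal step is `α⁻¹`-Lipschitz in its linear term; that term `∇ₓf(z_k, ·)` is
`L`-Lipschitz; and `y*` is `κ`-Lipschitz, by adding the strong-monotonicity inequality of
`-∇_y f(x₁, ·)` to the optimality conditions of `y*(x₁)` and `y*(x₂)`. The product of the
constants is `γ L κ / α = (k + 1) / (2 (k + 2)) ≤ 1 / 2`.
-/

open scoped RealInnerProductSpace

section FirstOrder

theorem IsMinOn.hasFDerivAt_sub_nonneg {E : Type*} [NormedAddCommGroup E] [NormedSpace ℝ E]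
    {s : Set E} {f : E → ℝ} {f' : E →L[ℝ] ℝ} {a y : E}
    (hs : Convex ℝ s) (hmin : IsMinOn f s a) (hf : HasFDerivAt f f' a) (ha : a ∈ s) (hy : y ∈ s) :
    0 ≤ f' (y - a) :=
  hmin.localize.hasFDerivWithinAt_nonneg hf.hasFDerivWithinAt
    (sub_mem_posTangentConeAt_of_segment_subset (hs.segment_subset ha hy))

variable {E : Type*} [NormedAddCommGroup E] [InnerProductSpace ℝ E] {s : Set E}

theorem IsMaxOn.inner_gradient_sub_nonpos [CompleteSpace E] {f : E → ℝ} {g a y : E}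
    (hs : Convex ℝ s) (hmax : IsMaxOn f s a) (hf : HasGradientAt f g a) (ha : a ∈ s) (hy : y ∈ s) :
    ⟪g, y - a⟫ ≤ 0 := by
  simpa using hmax.neg.hasFDerivAt_sub_nonneg hs (hasGradientAt_iff_hasFDerivAt.mp hf).neg ha hy

theorem hasFDerivAt_inner_add_mul_norm_sub_sq (g c a : E) (α : ℝ) :
    HasFDerivAt (fun v => ⟪g, v⟫ + α / 2 * ‖v - c‖ ^ 2) (innerSL ℝ (g + α • (a - c))) a := by
  refine ((innerSL ℝ g).hasFDerivAt.add
    (((hasFDerivAt_id a).sub_const c).norm_sq.const_mul (α / 2))).congr_fderiv ?_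
  ext v
  simp only [id_eq, map_sub, ContinuousLinearMap.comp_id, add_apply, coe_innerSL_apply, smul_apply,
    sub_apply, nsmul_eq_mul, Nat.cast_ofNat, smul_eq_mul, map_add, map_smul]
  ring

theorem mul_norm_sub_le_of_isMinOn_inner_add_mul_norm_sub_sq (hs : Convex ℝ s)
    {g₁ g₂ c u₁ u₂ : E} {α : ℝ}
    (h₁ : IsMinOn (fun v => ⟪g₁, v⟫ + α / 2 * ‖v - c‖ ^ 2) s u₁)
    (h₂ : IsMinOn (fun v => ⟪g₂, v⟫ + α / 2 * ‖v - c‖ ^ 2) s u₂) (hu₁ : u₁ ∈ s) (hu₂ : u₂ ∈ s) :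
    α * ‖u₁ - u₂‖ ≤ ‖g₁ - g₂‖ := by
  have opt₁ := h₁.hasFDerivAt_sub_nonneg hs (hasFDerivAt_inner_add_mul_norm_sub_sq g₁ c u₁ α) hu₁ hu₂
  have opt₂ := h₂.hasFDerivAt_sub_nonneg hs (hasFDerivAt_inner_add_mul_norm_sub_sq g₂ c u₂ α) hu₂ hu₁
  have key : α * ‖u₁ - u₂‖ ^ 2 ≤ ‖g₁ - g₂‖ * ‖u₁ - u₂‖ := by
    have hsum : ⟪g₁ + α • (u₁ - c), u₂ - u₁⟫ + ⟪g₂ + α • (u₂ - c), u₁ - u₂⟫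
        = ⟪g₁ - g₂, u₂ - u₁⟫ - α * ‖u₁ - u₂‖ ^ 2 := by
      rw [← real_inner_self_eq_norm_sq]
      simp only [inner_add_left, inner_sub_left, inner_sub_right, inner_smul_left,
        RCLike.conj_to_real, real_inner_comm u₁ u₂]
      ring
    simp only [innerSL_apply_apply] at opt₁ opt₂
    have := real_inner_le_norm (g₁ - g₂) (u₂ - u₁)
    rw [norm_sub_rev u₂] at this
    linarith
  rcases (norm_nonneg (u₁ - u₂)).eq_or_lt with h | h
  · rw [← h, mul_zero]; exact norm_nonneg _
  · nlinarith

end FirstOrder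

section BestResponse

variable {F : Type*} [NormedAddCommGroup F] [InnerProductSpace ℝ F] {Y : Set F} {μ : ℝ}

theorem mul_norm_sub_sq_le_inner_sub_of_strongConcave {h : F → ℝ} {g : F → F}
    (hconc : ∀ y₁ ∈ Y, ∀ y₂ ∈ Y, h y₁ - h y₂ ≤ ⟪g y₂, y₁ - y₂⟫ - μ / 2 * ‖y₁ - y₂‖ ^ 2)
    {y₁ y₂ : F} (hy₁ : y₁ ∈ Y) (hy₂ : y₂ ∈ Y) :
    μ * ‖y₁ - y₂‖ ^ 2 ≤ ⟪g y₂ - g y₁, y₁ - y₂⟫ := by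
  have h₁₂ := hconc y₁ hy₁ y₂ hy₂
  have h₂₁ := hconc y₂ hy₂ y₁ hy₁
  rw [norm_sub_rev y₂, ← neg_sub y₁ y₂, inner_neg_right] at h₂₁
  rw [inner_sub_left]
  linarith

theorem mul_norm_sub_le_of_isMaxOn_of_strongConcave {E : Type*} [NormedAddCommGroup E]
    [CompleteSpace F] {X : Set E} {L : ℝ}
    (hY : Convex ℝ Y) {f : E → F → ℝ} {gy : E → F → F}
    (hgy : ∀ x y, HasGradientAt (f x) (gy x y) y)
    (hconc : ∀ x ∈ X, ∀ y₁ ∈ Y, ∀ y₂ ∈ Y,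
      f x y₁ - f x y₂ ≤ ⟪gy x y₂, y₁ - y₂⟫ - μ / 2 * ‖y₁ - y₂‖ ^ 2)
    (hLip : ∀ x₁ ∈ X, ∀ x₂ ∈ X, ∀ y ∈ Y, ‖gy x₁ y - gy x₂ y‖ ≤ L * ‖x₁ - x₂‖)
    {ystar : E → F} (hystarY : ∀ x ∈ X, ystar x ∈ Y) (hystar : ∀ x ∈ X, IsMaxOn (f x) Y (ystar x))
    {x₁ x₂ : E} (hx₁ : x₁ ∈ X) (hx₂ : x₂ ∈ X) :
    μ * ‖ystar x₁ - ystar x₂‖ ≤ L * ‖x₁ - x₂‖ := by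
  set y₁ := ystar x₁
  set y₂ := ystar x₂
  have hy₁ := hystarY x₁ hx₁
  have hy₂ := hystarY x₂ hx₂
  have opt₁ : ⟪gy x₁ y₁, y₂ - y₁⟫ ≤ 0 :=
    (hystar x₁ hx₁).inner_gradient_sub_nonpos hY (hgy x₁ y₁) hy₁ hy₂
  have opt₂ : ⟪gy x₂ y₂, y₁ - y₂⟫ ≤ 0 :=
    (hystar x₂ hx₂).inner_gradient_sub_nonpos hY (hgy x₂ y₂) hy₂ hy₁
  have hmono := mul_norm_sub_sq_le_inner_sub_of_strongConcave (hconc x₁ hx₁) hy₁ hy₂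
  have key : μ * ‖y₁ - y₂‖ ^ 2 ≤ L * ‖x₁ - x₂‖ * ‖y₁ - y₂‖ := by
    have hcs := real_inner_le_norm (gy x₁ y₂ - gy x₂ y₂) (y₁ - y₂)
    have hLy := mul_le_mul_of_nonneg_right (hLip x₁ hx₁ x₂ hx₂ y₂ hy₂) (norm_nonneg (y₁ - y₂))
    rw [← neg_sub y₁ y₂, inner_neg_right] at opt₁
    simp only [inner_sub_left] at hmono hcs
    linarith
  rcases (norm_nonneg (y₁ - y₂)).eq_or_lt with h | h
  · rw [← h, mul_zero]; exact (norm_nonneg _).trans (hLip x₁ hx₁ x₂ hx₂ y₂ hy₂)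
  · nlinarith

end BestResponse

theorem le_mul_of_sq_add_sq_le {a b L d : ℝ} (hL : 0 ≤ L) (hd : 0 ≤ d)
    (h : a ^ 2 + b ^ 2 ≤ L ^ 2 * d ^ 2) : a ≤ L * d :=
  le_of_pow_le_pow_left₀ two_ne_zero (by positivity) (by nlinarith [sq_nonneg b])

theorem prox_map_is_contraction_general
    {n m : ℕ}
    (X : Set (EuclideanSpace ℝ (Fin n))) (Y : Set (EuclideanSpace ℝ (Fin m)))
    (hXconv : Convex ℝ X)
    (hYconv : Convex ℝ Y)
    (f : EuclideanSpace ℝ (Fin n) → EuclideanSpace ℝ (Fin m) → ℝ)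
    (gx : EuclideanSpace ℝ (Fin n) → EuclideanSpace ℝ (Fin m) → EuclideanSpace ℝ (Fin n))
    (gy : EuclideanSpace ℝ (Fin n) → EuclideanSpace ℝ (Fin m) → EuclideanSpace ℝ (Fin m))
    (hgy : ∀ x y, HasGradientAt (fun y' => f x y') (gy x y) y)
    (L μ κ : ℝ) (hμ : 0 < μ) (hμL : μ ≤ L) (hκ : κ = L / μ)
    (hsmooth : ∀ x₁ ∈ X, ∀ x₂ ∈ X, ∀ y₁ ∈ Y, ∀ y₂ ∈ Y,
      ‖gx x₁ y₁ - gx x₂ y₂‖ ^ 2 + ‖gy x₁ y₁ - gy x₂ y₂‖ ^ 2 ≤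
        L ^ 2 * (‖x₁ - x₂‖ ^ 2 + ‖y₁ - y₂‖ ^ 2))
    (hconc : ∀ x ∈ X, ∀ y₁ ∈ Y, ∀ y₂ ∈ Y,
      f x y₁ - f x y₂ ≤ ⟪gy x y₂, y₁ - y₂⟫ - μ / 2 * ‖y₁ - y₂‖ ^ 2)
    -- the best-response map y*
    (ystar : EuclideanSpace ℝ (Fin n) → EuclideanSpace ℝ (Fin m))
    (hystarY : ∀ x ∈ X, ystar x ∈ Y)
    (hystar : ∀ x ∈ X, ∀ y ∈ Y, f x y ≤ f x (ystar x))
    -- iteration data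
    (k : ℕ)
    (xprev vprev zk : EuclideanSpace ℝ (Fin n))
    (hzk : zk ∈ X)
    (γ α : ℝ) (hγ : γ = 3 / ((k : ℝ) + 2)) (hα : α = 6 * κ * L / ((k : ℝ) + 1))
    -- the argmin map of the subproblem and the resulting map ψ
    (vmin : EuclideanSpace ℝ (Fin n) → EuclideanSpace ℝ (Fin n))
    (hvminX : ∀ x ∈ X, vmin x ∈ X)
    (hvmin : ∀ x ∈ X, ∀ v ∈ X,
      ⟪gx zk (ystar x), vmin x⟫ + α / 2 * ‖vmin x - vprev‖ ^ 2 ≤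
        ⟪gx zk (ystar x), v⟫ + α / 2 * ‖v - vprev‖ ^ 2)
    (ψ : EuclideanSpace ℝ (Fin n) → EuclideanSpace ℝ (Fin n))
    (hψ : ∀ x, ψ x = (1 - γ) • xprev + γ • vmin x) :
    ∀ x₁ ∈ X, ∀ x₂ ∈ X, ‖ψ x₁ - ψ x₂‖ ≤ 1 / 2 * ‖x₁ - x₂‖ := by
  intro x₁ hx₁ x₂ hx₂
  have hL : 0 < L := hμ.trans_le hμL
  have hgyLip : ∀ x₁ ∈ X, ∀ x₂ ∈ X, ∀ y ∈ Y, ‖gy x₁ y - gy x₂ y‖ ≤ L * ‖x₁ - x₂‖ :=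
    fun x₁ hx₁ x₂ hx₂ y hy => le_mul_of_sq_add_sq_le hL.le (norm_nonneg _)
      (by simpa [add_comm] using hsmooth x₁ hx₁ x₂ hx₂ y hy y hy)
  have hy : μ * ‖ystar x₁ - ystar x₂‖ ≤ L * ‖x₁ - x₂‖ :=
    mul_norm_sub_le_of_isMaxOn_of_strongConcave hYconv hgy hconc hgyLip hystarY
      (fun x hx => isMaxOn_iff.mpr (hystar x hx)) hx₁ hx₂
  have hg : ‖gx zk (ystar x₁) - gx zk (ystar x₂)‖ ≤ L * ‖ystar x₁ - ystar x₂‖ :=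
    le_mul_of_sq_add_sq_le hL.le (norm_nonneg _)
      (by simpa using hsmooth zk hzk zk hzk _ (hystarY x₁ hx₁) _ (hystarY x₂ hx₂))
  have hv : α * ‖vmin x₁ - vmin x₂‖ ≤ ‖gx zk (ystar x₁) - gx zk (ystar x₂)‖ :=
    mul_norm_sub_le_of_isMinOn_inner_add_mul_norm_sub_sq hXconv
      (isMinOn_iff.mpr (hvmin x₁ hx₁)) (isMinOn_iff.mpr (hvmin x₂ hx₂))
      (hvminX x₁ hx₁) (hvminX x₂ hx₂)
  have hvx : 6 * ‖vmin x₁ - vmin x₂‖ ≤ ((k : ℝ) + 1) * ‖x₁ - x₂‖ := by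
    refine le_of_mul_le_mul_left ?_ (pow_pos hL 2)
    calc L ^ 2 * (6 * ‖vmin x₁ - vmin x₂‖)
        = ((k : ℝ) + 1) * μ * (α * ‖vmin x₁ - vmin x₂‖) := by
          rw [hα, hκ]; field_simp
      _ ≤ ((k : ℝ) + 1) * μ * (L * ‖ystar x₁ - ystar x₂‖) :=
          mul_le_mul_of_nonneg_left (hv.trans hg) (by positivity)
      _ = ((k : ℝ) + 1) * L * (μ * ‖ystar x₁ - ystar x₂‖) := by ring
      _ ≤ ((k : ℝ) + 1) * L * (L * ‖x₁ - x₂‖) := mul_le_mul_of_nonneg_left hy (by positivity)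
      _ = L ^ 2 * (((k : ℝ) + 1) * ‖x₁ - x₂‖) := by ring
  have hψsub : ψ x₁ - ψ x₂ = γ • (vmin x₁ - vmin x₂) := by rw [hψ, hψ]; module
  rw [hψsub, norm_smul, Real.norm_of_nonneg (by rw [hγ]; positivity), hγ, div_mul_eq_mul_div,
    div_le_iff₀ (by positivity)]
  linarith [norm_nonneg (x₁ - x₂)]

/-- With `γ_k = 3/(k+2)`, `α_k = 6κL/(k+1)` and
`ψ_k(x) = (1−γ_k)·x_{k−1} + γ_k · argmin_{v∈X}{⟪∇ₓf(z_k, y*(x)), v⟫ + (α_k/2)‖v − v_{k−1}‖²}`,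
the map `ψ_k` is a `(1/2)`-contraction on `X`. -/
theorem prox_map_is_contraction
    {n m : ℕ}
    (X : Set (EuclideanSpace ℝ (Fin n))) (Y : Set (EuclideanSpace ℝ (Fin m)))
    (hXconv : Convex ℝ X) (hXcomp : IsCompact X) (hXne : X.Nonempty)
    (hYconv : Convex ℝ Y) (hYcomp : IsCompact Y) (hYne : Y.Nonempty)
    (f : EuclideanSpace ℝ (Fin n) → EuclideanSpace ℝ (Fin m) → ℝ)
    (gx : EuclideanSpace ℝ (Fin n) → EuclideanSpace ℝ (Fin m) → EuclideanSpace ℝ (Fin n))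
    (gy : EuclideanSpace ℝ (Fin n) → EuclideanSpace ℝ (Fin m) → EuclideanSpace ℝ (Fin m))
    (hgx : ∀ x y, HasGradientAt (fun x' => f x' y) (gx x y) x)
    (hgy : ∀ x y, HasGradientAt (fun y' => f x y') (gy x y) y)
    (L μ κ : ℝ) (hμ : 0 < μ) (hμL : μ ≤ L) (hκ : κ = L / μ)
    (hsmooth : ∀ x₁ ∈ X, ∀ x₂ ∈ X, ∀ y₁ ∈ Y, ∀ y₂ ∈ Y,
      ‖gx x₁ y₁ - gx x₂ y₂‖ ^ 2 + ‖gy x₁ y₁ - gy x₂ y₂‖ ^ 2 ≤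
        L ^ 2 * (‖x₁ - x₂‖ ^ 2 + ‖y₁ - y₂‖ ^ 2))
    (hconv : ∀ y ∈ Y, ∀ x₁ ∈ X, ∀ x₂ ∈ X,
      f x₁ y - f x₂ y ≥ ⟪gx x₂ y, x₁ - x₂⟫)
    (hconc : ∀ x ∈ X, ∀ y₁ ∈ Y, ∀ y₂ ∈ Y,
      f x y₁ - f x y₂ ≤ ⟪gy x y₂, y₁ - y₂⟫ - μ / 2 * ‖y₁ - y₂‖ ^ 2)
    -- the best-response map y*
    (ystar : EuclideanSpace ℝ (Fin n) → EuclideanSpace ℝ (Fin m))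
    (hystarY : ∀ x ∈ X, ystar x ∈ Y)
    (hystar : ∀ x ∈ X, ∀ y ∈ Y, f x y ≤ f x (ystar x))
    -- iteration data
    (k : ℕ) (hk : 1 ≤ k)
    (xprev vprev zk : EuclideanSpace ℝ (Fin n))
    (hxprev : xprev ∈ X) (hvprev : vprev ∈ X) (hzk : zk ∈ X)
    (γ α : ℝ) (hγ : γ = 3 / ((k : ℝ) + 2)) (hα : α = 6 * κ * L / ((k : ℝ) + 1))
    -- the argmin map of the subproblem and the resulting map ψ
    (vmin : EuclideanSpace ℝ (Fin n) → EuclideanSpace ℝ (Fin n))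
    (hvminX : ∀ x ∈ X, vmin x ∈ X)
    (hvmin : ∀ x ∈ X, ∀ v ∈ X,
      ⟪gx zk (ystar x), vmin x⟫ + α / 2 * ‖vmin x - vprev‖ ^ 2 ≤
        ⟪gx zk (ystar x), v⟫ + α / 2 * ‖v - vprev‖ ^ 2)
    (ψ : EuclideanSpace ℝ (Fin n) → EuclideanSpace ℝ (Fin n))
    (hψ : ∀ x, ψ x = (1 - γ) • xprev + γ • vmin x) :
    ∀ x₁ ∈ X, ∀ x₂ ∈ X, ‖ψ x₁ - ψ x₂‖ ≤ 1 / 2 * ‖x₁ - x₂‖ :=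
  prox_map_is_contraction_general X Y hXconv hYconv f gx gy hgy L μ κ hμ hμL hκ hsmooth hconc ystar
    hystarY hystar k xprev vprev zk hzk γ α hγ hα vmin hvminX hvmin ψ hψ
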